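/- arXiv:2509.06850 — 3 statements merged into one kernel-verified Lean document; each statement's English description precedes it below -/
import Mathlib

section
/- (Cycle lemma for downward skip-free walks) For all k, ℓ ≥ 1, the weighted count of downward skip-free walks with ℓ steps from 0 to −k that remain strictly above −k before the last step equals (k/ℓ) times the weighted count of all downward skip-free walks with ℓ steps from 0 to −k. In generating function terms: [s^ℓ] U(s)^k = (k/ℓ)·[u^{−k}] P(u)^ℓ. -/
noncomputable section

/-- The coefficient ring: polynomials over `ℚ` in the formal variables
`p_{-1}, p_0, p_1, p_2, ...` (variable `p_j` is `X (j+1)`). -/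
abbrev Rp : Type := MvPolynomial ℕ ℚ

/-- The step weight `p_j` for a step of increment `j ≥ -1` (zero otherwise). -/
def pw (j : ℤ) : Rp := if -1 ≤ j then MvPolynomial.X (j + 1).toNat else 0

/-- The formal Laurent series `P(u) = p_{-1}u⁻¹ + p₀ + p₁u + p₂u² + ⋯`. -/
def Pser : LaurentSeries Rp :=
  HahnSeries.single (-1 : ℤ) (pw (-1)) +
    HahnSeries.ofPowerSeries ℤ Rp (PowerSeries.mk fun n => pw (n : ℤ))

/-- A sequence of positions `π₀, ..., π_ℓ` is a downward skip-free walk if every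
increment is at least `-1`. -/
def IsDSF {ℓ : ℕ} (π : Fin (ℓ + 1) → ℤ) : Prop :=
  ∀ i : Fin ℓ, -1 ≤ π i.succ - π i.castSucc

/-- The weight of a walk: the product over its steps of `p_{increment}`. -/
def walkWeight {ℓ : ℕ} (π : Fin (ℓ + 1) → ℤ) : Rp :=
  ∏ i : Fin ℓ, pw (π i.succ - π i.castSucc)

/-- The total weight of excursions with `ℓ` steps. -/
def excCoeff (ℓ : ℕ) : Rp :=
  ∑ᶠ (π : Fin (ℓ + 1) → ℤ)
    (_ : IsDSF π ∧ π 0 = 0 ∧ π (Fin.last ℓ) = -1 ∧ ∀ i : Fin ℓ, 0 ≤ π i.castSucc),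
    walkWeight π

/-- The generating function `U(s)` of excursions. -/
def Uexc : PowerSeries Rp := PowerSeries.mk excCoeff

/-!
Walks from `0` are encoded by their lists of steps. Among the `ℓ` cyclic rotations of a skip-free
step list with displacement `-k`, exactly `k` are first passages to `-k`: the rotation by `j` is
one iff `j + ℓ` is a time of strict running minimum for the doubled walk, and the running
minimum of a skip-free walk drops by one at each such time, `k` in total over one period.
Averaging the weight over all rotations gives `ℓ · [first passages] = k · [all walks]`.

On the generating-function side, a first passage to `-(k + 1)` splits uniquely at its first
visit to `-k` into a first passage to `-k` followed by an excursion, so `[s^ℓ] U(s)^k` is the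
weight of first passages; and `u · P(u) = ∑ₙ p_{n-1} uⁿ`, so `[u^c] P(u)^ℓ` is the weight of all
`ℓ`-step walks to `c`.
-/

namespace SkipFree

open Finset

def weight (l : List ℤ) : Rp := (l.map pw).prod

@[simp] theorem weight_nil : weight [] = 1 := rfl

@[simp] theorem weight_cons (x : ℤ) (l : List ℤ) : weight (x :: l) = pw x * weight l := by
  simp [weight]

@[simp] theorem weight_append (l₁ l₂ : List ℤ) : weight (l₁ ++ l₂) = weight l₁ * weight l₂ := by
  simp [weight]

theorem weight_rotate (l : List ℤ) (j : ℕ) : weight (l.rotate j) = weight l :=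
  ((l.rotate_perm j).map pw).prod_eq

section SkipFreeList

variable {l : List ℤ}

theorem neg_length_le_sum (hl : ∀ x ∈ l, -1 ≤ x) : -(l.length : ℤ) ≤ l.sum := by
  simpa using l.card_nsmul_le_sum (-1) hl

theorem le_sum_add_length (hl : ∀ x ∈ l, -1 ≤ x) {x : ℤ} (hx : x ∈ l) :
    x ≤ l.sum + l.length := by
  have h := List.single_le_sum (l := l.map (· + 1))
    (by simpa using fun y hy => by linarith [hl y hy]) (x + 1) (List.mem_map_of_mem hx)
  simp only [List.sum_map_add, List.map_id', List.map_const', List.sum_replicate,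
    nsmul_eq_mul, mul_one] at h
  omega

theorem sum_take_sub_one_le (hl : ∀ x ∈ l, -1 ≤ x) (m : ℕ) :
    (l.take m).sum - 1 ≤ (l.take (m + 1)).sum := by
  rcases lt_or_ge m l.length with h | h
  · have := hl _ (List.getElem_mem h)
    rw [List.sum_take_succ _ _ h]
    omega
  · rw [List.take_of_length_le h, List.take_of_length_le (by omega)]
    omega

theorem exists_first_sum_take_eq (hl : ∀ x ∈ l, -1 ≤ x) {v : ℤ} (hv : v ≤ 0) {n : ℕ}
    (hn : (l.take n).sum ≤ v) :
    ∃ m ≤ n, (l.take m).sum = v ∧ ∀ t < m, v < (l.take t).sum := by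
  classical
  have hex : ∃ m, (l.take m).sum ≤ v := ⟨n, hn⟩
  refine ⟨Nat.find hex, Nat.find_min' hex hn, ?_, fun t ht => not_le.1 (Nat.find_min hex ht)⟩
  have hle := Nat.find_spec hex
  cases hm : Nat.find hex with
  | zero => rw [hm] at hle; simp only [List.take_zero, List.sum_nil] at hle ⊢; omega
  | succ t =>
    have hprev := Nat.find_min hex (m := t) (by omega)
    have := sum_take_sub_one_le hl t
    rw [hm] at hle
    omega

end SkipFreeList

/-- The box bound `c + ℓ` holds for every entry anyway (`le_sum_add_length`); it only makes the
set finite. -/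
def steps (ℓ : ℕ) (c : ℤ) : Finset (List ℤ) :=
  ((Fintype.piFinset fun _ : Fin ℓ => Icc (-1) (c + ℓ)).image List.ofFn).filter (·.sum = c)

theorem mem_steps {ℓ : ℕ} {c : ℤ} {l : List ℤ} :
    l ∈ steps ℓ c ↔ l.length = ℓ ∧ (∀ x ∈ l, -1 ≤ x) ∧ l.sum = c := by
  simp only [steps, mem_filter, mem_image, Fintype.mem_piFinset, mem_Icc]
  constructor
  · rintro ⟨⟨σ, hσ, rfl⟩, hsum⟩
    refine ⟨List.length_ofFn, fun x hx => ?_, hsum⟩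
    obtain ⟨i, rfl⟩ := List.mem_ofFn.1 hx
    exact (hσ i).1
  · rintro ⟨rfl, hl, rfl⟩
    refine ⟨⟨fun i => l[i], fun i => ⟨hl _ (List.getElem_mem _), ?_⟩, List.ofFn_getElem⟩, rfl⟩
    exact le_sum_add_length hl (List.getElem_mem _)

theorem sum_steps_zero (c : ℤ) :
    ∑ l ∈ steps 0 c, weight l = if c = 0 then 1 else 0 := by
  split_ifs with hc
  · subst hc
    rw [sum_eq_single_of_mem [] (mem_steps.2 ⟨rfl, by simp, rfl⟩ : [] ∈ steps 0 0), weight_nil]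
    intro l hl hne
    exact absurd (List.length_eq_zero_iff.1 (mem_steps.1 hl).1) hne
  · refine sum_eq_zero fun l hl => absurd ?_ hc
    obtain ⟨hlen, -, rfl⟩ := mem_steps.1 hl
    simp [List.length_eq_zero_iff.1 hlen]

theorem steps_eq_empty {ℓ : ℕ} {c : ℤ} (hc : c < -ℓ) : steps ℓ c = ∅ :=
  eq_empty_of_forall_notMem fun l hl => by
    obtain ⟨rfl, hstep, rfl⟩ := mem_steps.1 hl
    exact absurd (neg_length_le_sum hstep) (not_le.2 hc)

theorem rotate_mem_steps {ℓ : ℕ} {c : ℤ} {l : List ℤ} (hl : l ∈ steps ℓ c) (j : ℕ) :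
    l.rotate j ∈ steps ℓ c := by
  obtain ⟨hlen, hstep, hsum⟩ := mem_steps.1 hl
  exact mem_steps.2 ⟨by rw [List.length_rotate, hlen],
    fun x hx => hstep x ((l.rotate_perm j).subset hx), by rw [(l.rotate_perm j).sum_eq, hsum]⟩

def firstPassage (ℓ k : ℕ) : Finset (List ℤ) :=
  (steps ℓ (-k)).filter fun l => ∀ m < ℓ, -(k : ℤ) < (l.take m).sum

theorem mem_firstPassage {ℓ k : ℕ} {l : List ℤ} :
    l ∈ firstPassage ℓ k ↔ l ∈ steps ℓ (-k) ∧ ∀ m < ℓ, -(k : ℤ) < (l.take m).sum :=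
  mem_filter

def walkOf (ℓ : ℕ) (l : List ℤ) : Fin (ℓ + 1) → ℤ := fun j => (l.take j).sum

theorem walkOf_succ_sub_castSucc (l : List ℤ) (i : Fin l.length) :
    walkOf l.length l i.succ - walkOf l.length l i.castSucc = l[i.1] := by
  simp only [walkOf, Fin.val_succ, Fin.val_castSucc, List.sum_take_succ _ _ i.2]
  ring

theorem walkOf_ofFn {ℓ : ℕ} {π : Fin (ℓ + 1) → ℤ} (h0 : π 0 = 0) :
    walkOf ℓ (List.ofFn fun i => π i.succ - π i.castSucc) = π := by
  have h := Fin.partialSum_left_neg π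
  simp only [h0, zero_vadd, neg_add_eq_sub] at h
  exact h

theorem walkOf_injOn (ℓ : ℕ) : Set.InjOn (walkOf ℓ) {l | l.length = ℓ} := by
  rintro l (hl : l.length = ℓ) l' (hl' : l'.length = ℓ) h
  have hsum (j : ℕ) (hj : j ≤ ℓ) : (l.take j).sum = (l'.take j).sum :=
    congrFun h ⟨j, Nat.lt_succ_of_le hj⟩
  refine List.ext_getElem (hl.trans hl'.symm) fun i hi hi' => ?_
  have := hsum i (by omega)
  have := hsum (i + 1) (by omega)
  rw [List.sum_take_succ _ _ hi, List.sum_take_succ _ _ hi'] at this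
  omega

theorem isDSF_walkOf_iff (l : List ℤ) :
    IsDSF (walkOf l.length l) ↔ ∀ x ∈ l, -1 ≤ x := by
  simp only [IsDSF, walkOf_succ_sub_castSucc, List.forall_mem_iff_getElem, Fin.forall_iff]

theorem walkWeight_walkOf (l : List ℤ) : walkWeight (walkOf l.length l) = weight l := by
  simp only [walkWeight, walkOf_succ_sub_castSucc, weight, ← List.ofFn_getElem_eq_map,
    List.prod_ofFn]

theorem finsum_walks_eq_sum (ℓ : ℕ) (Ψ : (Fin (ℓ + 1) → ℤ) → Prop) (s : Finset (List ℤ))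
    (hs : ∀ l, l ∈ s ↔ l.length = ℓ ∧ (∀ x ∈ l, -1 ≤ x) ∧ Ψ (walkOf ℓ l)) :
    ∑ᶠ (π : Fin (ℓ + 1) → ℤ) (_ : IsDSF π ∧ π 0 = 0 ∧ Ψ π), walkWeight π
      = ∑ l ∈ s, weight l := by
  have himage : {π : Fin (ℓ + 1) → ℤ | IsDSF π ∧ π 0 = 0 ∧ Ψ π} = walkOf ℓ '' s := by
    ext π
    constructor
    · rintro ⟨hπ, h0, hΨ⟩
      set l := List.ofFn fun i => π i.succ - π i.castSucc
      have hlen : l.length = ℓ := List.length_ofFn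
      refine ⟨l, (hs l).2 ⟨hlen, ?_, by rwa [walkOf_ofFn h0]⟩, walkOf_ofFn h0⟩
      rw [← isDSF_walkOf_iff, hlen, walkOf_ofFn h0]
      exact hπ
    · rintro ⟨l, hl, rfl⟩
      obtain ⟨rfl, hstep, hΨ⟩ := (hs l).1 hl
      exact ⟨(isDSF_walkOf_iff l).2 hstep, by simp [walkOf], hΨ⟩
  have hinj : Set.InjOn (walkOf ℓ) s := fun l hl l' hl' =>
    walkOf_injOn ℓ ((hs l).1 hl).1 ((hs l').1 hl').1
  change ∑ᶠ π ∈ {π | IsDSF π ∧ π 0 = 0 ∧ Ψ π}, walkWeight π = _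
  rw [himage, finsum_mem_image hinj, finsum_mem_coe_finset]
  refine sum_congr rfl fun l hl => ?_
  obtain ⟨rfl, -⟩ := (hs l).1 hl
  exact walkWeight_walkOf l

theorem finsum_walks_eq_sum_steps (ℓ : ℕ) (c : ℤ) :
    ∑ᶠ (π : Fin (ℓ + 1) → ℤ) (_ : IsDSF π ∧ π 0 = 0 ∧ π (Fin.last ℓ) = c), walkWeight π
      = ∑ l ∈ steps ℓ c, weight l :=
  finsum_walks_eq_sum ℓ _ _ fun l => by
    rw [mem_steps]
    refine and_congr_right fun hlen => and_congr_right fun _ => ?_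
    simp [walkOf, List.take_of_length_le hlen.le]

theorem mem_firstPassage_iff_walkOf {ℓ k : ℕ} {l : List ℤ} :
    l ∈ firstPassage ℓ k ↔ l.length = ℓ ∧ (∀ x ∈ l, -1 ≤ x) ∧
      (walkOf ℓ l (Fin.last ℓ) = -(k : ℤ) ∧ ∀ i : Fin ℓ, -(k : ℤ) < walkOf ℓ l i.castSucc) := by
  rw [mem_firstPassage, mem_steps, and_assoc, and_assoc]
  refine and_congr_right fun hlen => and_congr_right fun _ => and_congr ?_ ?_
  · simp [walkOf, List.take_of_length_le hlen.le]
  · simp [walkOf, Fin.forall_iff]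

theorem finsum_walks_eq_sum_firstPassage (ℓ k : ℕ) :
    ∑ᶠ (π : Fin (ℓ + 1) → ℤ)
        (_ : IsDSF π ∧ π 0 = 0 ∧ π (Fin.last ℓ) = -(k : ℤ) ∧
          ∀ i : Fin ℓ, -(k : ℤ) < π i.castSucc), walkWeight π
      = ∑ l ∈ firstPassage ℓ k, weight l :=
  finsum_walks_eq_sum ℓ _ _ fun _ => mem_firstPassage_iff_walkOf

section PrefixMin

def prefixMin (S : ℕ → ℤ) : ℕ → ℤ
  | 0 => S 0
  | n + 1 => min (prefixMin S n) (S (n + 1))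

variable {S : ℕ → ℤ}

theorem le_prefixMin_iff {x : ℤ} {n : ℕ} : x ≤ prefixMin S n ↔ ∀ t ≤ n, x ≤ S t := by
  induction n with
  | zero => simp [prefixMin]
  | succ n ih => simp [prefixMin, ih, Nat.le_succ_iff, or_imp, forall_and]

theorem lt_prefixMin_iff {x : ℤ} {n : ℕ} : x < prefixMin S n ↔ ∀ t ≤ n, x < S t := by
  simpa only [Int.add_one_le_iff] using le_prefixMin_iff (x := x + 1)

theorem prefixMin_sub_prefixMin_succ (hS : ∀ t, S t - 1 ≤ S (t + 1)) (n : ℕ) :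
    prefixMin S n - prefixMin S (n + 1) = if S (n + 1) < prefixMin S n then 1 else 0 := by
  have hmin : prefixMin S n ≤ S n := le_prefixMin_iff.1 le_rfl n le_rfl
  have := hS n
  simp only [prefixMin]
  split_ifs <;> omega

theorem prefixMin_add_of_periodic {ℓ k : ℕ} (hper : ∀ t < ℓ, S (t + ℓ) = S t - k) (hℓ : 0 < ℓ) :
    prefixMin S (ℓ - 1 + ℓ) = prefixMin S (ℓ - 1) - k := by
  refine eq_of_forall_le_iff fun x => ?_
  rw [le_prefixMin_iff, le_sub_iff_add_le, le_prefixMin_iff]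
  constructor
  · intro h t ht
    have := h (t + ℓ) (by omega)
    rw [hper t (by omega)] at this
    omega
  · intro h t ht
    rcases lt_or_ge t ℓ with htℓ | htℓ
    · have := h t (by omega)
      omega
    · obtain ⟨t, rfl⟩ := Nat.exists_eq_add_of_le' htℓ
      have := h t (by omega)
      rw [hper t (by omega)]
      omega

/-- A shift `j` is counted iff `j + ℓ` is a time of strict running minimum of `S`; these times
are counted by the drop `k` of the running minimum between times `ℓ - 1` and `2ℓ - 1`. -/
theorem card_filter_forall_sub_lt (hS : ∀ t, S t - 1 ≤ S (t + 1)) {ℓ k : ℕ}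
    (hper : ∀ t < ℓ, S (t + ℓ) = S t - k) (hℓ : 0 < ℓ) :
    #{j ∈ range ℓ | ∀ m < ℓ, S j - k < S (j + m)} = k := by
  have hgood (j : ℕ) (hj : j < ℓ) :
      (∀ m < ℓ, S j - k < S (j + m)) ↔ S (ℓ - 1 + j + 1) < prefixMin S (ℓ - 1 + j) := by
    rw [show ℓ - 1 + j + 1 = j + ℓ by omega, hper j hj, lt_prefixMin_iff]
    constructor
    · intro h t ht
      rcases le_or_gt j t with hjt | htj
      · simpa [Nat.add_sub_cancel' hjt] using h (t - j) (by omega)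
      · have := h (t + ℓ - j) (by omega)
        rw [show j + (t + ℓ - j) = t + ℓ by omega, hper t (by omega)] at this
        omega
    · intro h m hm
      exact h (j + m) (by omega)
  have hterm (j : ℕ) (hj : j < ℓ) :
      ((if ∀ m < ℓ, S j - k < S (j + m) then 1 else 0 : ℕ) : ℤ)
        = prefixMin S (ℓ - 1 + j) - prefixMin S (ℓ - 1 + (j + 1)) := by
    rw [← add_assoc, prefixMin_sub_prefixMin_succ hS]
    simp only [hgood j hj, Nat.cast_ite, Nat.cast_one, Nat.cast_zero]
  have hcount : (#{j ∈ range ℓ | ∀ m < ℓ, S j - k < S (j + m)} : ℤ)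
      = prefixMin S (ℓ - 1) - prefixMin S (ℓ - 1 + ℓ) := by
    rw [card_filter, Nat.cast_sum, sum_congr rfl fun j hj => hterm j (mem_range.1 hj)]
    exact sum_range_sub' (fun j => prefixMin S (ℓ - 1 + j)) ℓ
  rw [prefixMin_add_of_periodic hper hℓ] at hcount
  omega

end PrefixMin

theorem sum_take_rotate {l : List ℤ} {j m : ℕ} (hj : j ≤ l.length) (hm : m ≤ l.length) :
    ((l.rotate j).take m).sum = ((l ++ l).take (j + m)).sum - ((l ++ l).take j).sum := by
  have hrot : (l.rotate j).take m = ((l ++ l).drop j).take m := by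
    rw [List.rotate_eq_drop_append_take hj, List.drop_append_of_le_length hj, List.take_append,
      List.take_append, List.take_take]
    congr 3
    simp only [List.length_drop]
    omega
  rw [hrot, List.take_add, List.sum_append]
  ring

theorem rotate_mem_firstPassage_iff {ℓ k : ℕ} {l : List ℤ} (hl : l ∈ steps ℓ (-k)) {j : ℕ}
    (hj : j < ℓ) :
    l.rotate j ∈ firstPassage ℓ k ↔
      ∀ m < ℓ, ((l ++ l).take j).sum - k < ((l ++ l).take (j + m)).sum := by
  have hlen := (mem_steps.1 hl).1
  rw [mem_firstPassage, and_iff_right (rotate_mem_steps hl j)]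
  refine forall₂_congr fun m hm => ?_
  rw [sum_take_rotate (by omega) (by omega)]
  constructor <;> intro h <;> linarith

theorem card_rotate_mem_firstPassage {ℓ k : ℕ} {l : List ℤ} (hl : l ∈ steps ℓ (-k))
    (hℓ : 0 < ℓ) : #{j ∈ range ℓ | l.rotate j ∈ firstPassage ℓ k} = k := by
  obtain ⟨hlen, hstep, hsum⟩ := mem_steps.1 hl
  have hstep₂ : ∀ x ∈ l ++ l, -1 ≤ x := by
    simpa only [List.mem_append, or_imp, forall_and] using ⟨hstep, hstep⟩
  rw [filter_congr fun j hj => rotate_mem_firstPassage_iff hl (mem_range.1 hj)]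
  refine card_filter_forall_sub_lt (sum_take_sub_one_le hstep₂) (fun t ht => ?_) hℓ
  rw [show t + ℓ = l.length + t by omega, List.take_append, List.take_of_length_le (by omega),
    List.take_append_of_le_length (by omega), Nat.add_sub_cancel_left, List.sum_append, hsum]
  ring

theorem sum_firstPassage_eq_sum_filter_rotate {ℓ k j : ℕ} (hj : j ≤ ℓ) :
    ∑ l ∈ firstPassage ℓ k, weight l
      = ∑ l ∈ steps ℓ (-k) with l.rotate j ∈ firstPassage ℓ k, weight l := by
  have hrot {l : List ℤ} (hl : l ∈ steps ℓ (-k)) (i i' : ℕ) (hii' : i + i' = ℓ) :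
      (l.rotate i).rotate i' = l := by
    rw [List.rotate_rotate, hii', ← (mem_steps.1 hl).1, List.rotate_length]
  refine sum_nbij' (fun l => l.rotate (ℓ - j)) (fun l => l.rotate j) (fun l hl => ?_)
    (fun l hl => (mem_filter.1 hl).2) (fun l hl => ?_) (fun l hl => ?_)
    (fun l _ => (weight_rotate l _).symm)
  · have hs := (mem_firstPassage.1 hl).1
    exact mem_filter.2 ⟨rotate_mem_steps hs _, by rwa [hrot hs _ _ (by omega)]⟩
  · exact hrot (mem_firstPassage.1 hl).1 _ _ (by omega)
  · exact hrot (mem_filter.1 hl).1 _ _ (by omega)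

theorem nsmul_sum_firstPassage {ℓ k : ℕ} (hℓ : 0 < ℓ) :
    ℓ • ∑ l ∈ firstPassage ℓ k, weight l = k • ∑ l ∈ steps ℓ (-k), weight l := by
  calc ℓ • ∑ l ∈ firstPassage ℓ k, weight l
      = ∑ j ∈ range ℓ, ∑ l ∈ steps ℓ (-k) with l.rotate j ∈ firstPassage ℓ k, weight l := by
        rw [sum_congr rfl fun j hj =>
          (sum_firstPassage_eq_sum_filter_rotate (mem_range.1 hj).le).symm, sum_const, card_range]
    _ = ∑ l ∈ steps ℓ (-k), #{j ∈ range ℓ | l.rotate j ∈ firstPassage ℓ k} • weight l := by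
        simp only [sum_filter]
        rw [sum_comm]
        exact sum_congr rfl fun l _ => by rw [← sum_filter, sum_const]
    _ = k • ∑ l ∈ steps ℓ (-k), weight l := by
        rw [smul_sum]
        exact sum_congr rfl fun l hl => by rw [card_rotate_mem_firstPassage hl hℓ]

theorem sum_firstPassage_eq_smul {ℓ : ℕ} (hℓ : 0 < ℓ) (k : ℕ) :
    ∑ l ∈ firstPassage ℓ k, weight l = ((k : ℚ) / ℓ) • ∑ l ∈ steps ℓ (-k), weight l := by
  rw [div_eq_inv_mul, mul_smul, Nat.cast_smul_eq_nsmul, ← nsmul_sum_firstPassage hℓ,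
    ← Nat.cast_smul_eq_nsmul ℚ, inv_smul_smul₀ (Nat.cast_ne_zero.2 hℓ.ne')]

theorem length_of_mem_firstPassage {ℓ k : ℕ} {l : List ℤ} (hl : l ∈ firstPassage ℓ k) :
    l.length = ℓ :=
  (mem_steps.1 (mem_firstPassage.1 hl).1).1

theorem append_mem_firstPassage {a b k : ℕ} {l₁ l₂ : List ℤ} (h₁ : l₁ ∈ firstPassage a k)
    (h₂ : l₂ ∈ firstPassage b 1) : l₁ ++ l₂ ∈ firstPassage (a + b) (k + 1) := by
  obtain ⟨hs₁, hm₁⟩ := mem_firstPassage.1 h₁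
  obtain ⟨hs₂, hm₂⟩ := mem_firstPassage.1 h₂
  obtain ⟨hlen₁, hstep₁, hsum₁⟩ := mem_steps.1 hs₁
  obtain ⟨hlen₂, hstep₂, hsum₂⟩ := mem_steps.1 hs₂
  refine mem_firstPassage.2 ⟨mem_steps.2 ⟨by simp [hlen₁, hlen₂], ?_, ?_⟩, fun m hm => ?_⟩
  · simpa only [List.mem_append, or_imp, forall_and] using ⟨hstep₁, hstep₂⟩
  · rw [List.sum_append, hsum₁, hsum₂]
    push_cast
    ring
  · rw [List.take_append, List.sum_append, hlen₁]
    rcases lt_or_ge m a with hma | hma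
    · have := hm₁ m hma
      rw [Nat.sub_eq_zero_of_le hma.le, List.take_zero, List.sum_nil]
      push_cast
      omega
    · have := hm₂ (m - a) (by omega)
      rw [List.take_of_length_le (by omega), hsum₁]
      push_cast
      omega

/-- A first passage to `-k` is not a proper prefix of another one. -/
theorem not_lt_of_append_eq_append {a a' k : ℕ} {l₁ l₁' l₂ l₂' : List ℤ}
    (h₁ : l₁ ∈ firstPassage a k) (h₁' : l₁' ∈ firstPassage a' k) (h : l₁ ++ l₂ = l₁' ++ l₂') :
    ¬ a < a' := by
  intro hlt
  have hsum := (mem_steps.1 (mem_firstPassage.1 h₁).1).2.2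
  have hprefix : l₁ = l₁'.take a := by
    have := congrArg (List.take a) h
    rwa [List.take_left' (length_of_mem_firstPassage h₁),
      List.take_append_of_le_length (by rw [length_of_mem_firstPassage h₁']; omega)] at this
  have := (mem_firstPassage.1 h₁').2 a hlt
  rw [← hprefix, hsum] at this
  exact lt_irrefl _ this

/-- Cutting a first passage to `-(k + 1)` at its first visit to `-k`. -/
theorem exists_take_drop_mem_firstPassage {ℓ k : ℕ} {l : List ℤ}
    (hl : l ∈ firstPassage ℓ (k + 1)) :
    ∃ a ≤ ℓ, l.take a ∈ firstPassage a k ∧ l.drop a ∈ firstPassage (ℓ - a) 1 := by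
  obtain ⟨hs, hm⟩ := mem_firstPassage.1 hl
  obtain ⟨hlen, hstep, hsum⟩ := mem_steps.1 hs
  obtain ⟨a, haℓ, ha, hbefore⟩ := exists_first_sum_take_eq hstep (v := -k) (by omega) (n := ℓ)
    (by rw [List.take_of_length_le hlen.le, hsum]; push_cast; omega)
  refine ⟨a, haℓ, mem_firstPassage.2 ⟨mem_steps.2 ⟨by simp [hlen, haℓ],
    fun x hx => hstep x (List.mem_of_mem_take hx), ha⟩, fun t ht => ?_⟩,
    mem_firstPassage.2 ⟨mem_steps.2 ⟨by simp [hlen],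
    fun x hx => hstep x (List.mem_of_mem_drop hx), ?_⟩, fun t ht => ?_⟩⟩
  · rw [List.take_take, min_eq_left ht.le]
    exact hbefore t ht
  · have := l.sum_take_add_sum_drop a
    rw [ha, hsum] at this
    push_cast at this
    omega
  · have := hm (a + t) (by omega)
    rw [List.take_add, List.sum_append, ha] at this
    push_cast at this
    omega

theorem sum_firstPassage_succ (ℓ k : ℕ) :
    ∑ l ∈ firstPassage ℓ (k + 1), weight l
      = ∑ p ∈ antidiagonal ℓ,
          (∑ l ∈ firstPassage p.1 k, weight l) * ∑ l ∈ firstPassage p.2 1, weight l := by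
  simp_rw [sum_mul_sum, ← sum_product']
  rw [sum_sigma']
  symm
  refine sum_bij (fun x _ => x.2.1 ++ x.2.2) ?_ ?_ ?_ ?_
  · rintro ⟨⟨a, b⟩, l₁, l₂⟩ hx
    simp only [mem_sigma, HasAntidiagonal.mem_antidiagonal, mem_product] at hx
    obtain ⟨rfl, h₁, h₂⟩ := hx
    exact append_mem_firstPassage h₁ h₂
  · rintro ⟨⟨a, b⟩, l₁, l₂⟩ hx ⟨⟨a', b'⟩, l₁', l₂'⟩ hx' (h : l₁ ++ l₂ = l₁' ++ l₂')
    simp only [mem_sigma, HasAntidiagonal.mem_antidiagonal, mem_product] at hx hx'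
    obtain ⟨hab, h₁, -⟩ := hx
    obtain ⟨hab', h₁', -⟩ := hx'
    obtain rfl : a = a' := le_antisymm (not_lt.1 (not_lt_of_append_eq_append h₁' h₁ h.symm))
      (not_lt.1 (not_lt_of_append_eq_append h₁ h₁' h))
    obtain rfl : b = b' := by omega
    obtain ⟨rfl, rfl⟩ := List.append_inj h
      (by rw [length_of_mem_firstPassage h₁, length_of_mem_firstPassage h₁'])
    rfl
  · intro l hl
    obtain ⟨a, ha, h₁, h₂⟩ := exists_take_drop_mem_firstPassage hl
    refine ⟨⟨(a, ℓ - a), l.take a, l.drop a⟩, ?_, List.take_append_drop a l⟩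
    simp only [mem_sigma, HasAntidiagonal.mem_antidiagonal, mem_product]
    exact ⟨by omega, h₁, h₂⟩
  · rintro ⟨⟨a, b⟩, l₁, l₂⟩ _
    exact (weight_append l₁ l₂).symm

theorem sum_firstPassage_zero (ℓ : ℕ) :
    ∑ l ∈ firstPassage ℓ 0, weight l = if ℓ = 0 then 1 else 0 := by
  split_ifs with hℓ
  · subst hℓ
    have : firstPassage 0 0 = steps 0 0 := by
      ext l
      simp [mem_firstPassage]
    rw [this, sum_steps_zero, if_pos rfl]
  · exact sum_eq_zero fun l hl => absurd ((mem_firstPassage.1 hl).2 0 (by omega)) (by simp)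

theorem excCoeff_eq_sum (n : ℕ) : excCoeff n = ∑ l ∈ firstPassage n 1, weight l :=
  finsum_walks_eq_sum n _ _ fun l => by
    rw [mem_firstPassage_iff_walkOf]
    simp [Int.lt_iff_add_one_le]

theorem coeff_Uexc_pow (k ℓ : ℕ) :
    PowerSeries.coeff ℓ (Uexc ^ k) = ∑ l ∈ firstPassage ℓ k, weight l := by
  induction k generalizing ℓ with
  | zero => rw [pow_zero, PowerSeries.coeff_one, sum_firstPassage_zero]
  | succ k ih =>
    rw [pow_succ, PowerSeries.coeff_mul, sum_firstPassage_succ]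
    refine sum_congr rfl fun p _ => ?_
    rw [ih, Uexc, PowerSeries.coeff_mk, excCoeff_eq_sum]

def stepSeries : PowerSeries Rp := PowerSeries.mk fun n => pw (n - 1)

theorem Pser_eq :
    Pser = HahnSeries.single (-1 : ℤ) 1 * HahnSeries.ofPowerSeries ℤ Rp stepSeries := by
  have h : stepSeries =
      PowerSeries.X * PowerSeries.mk (fun n => pw n) + PowerSeries.C (pw (-1)) := by
    conv_lhs => rw [PowerSeries.eq_X_mul_shift_add_const stepSeries]
    simp [stepSeries]
  rw [h, map_add, map_mul, HahnSeries.ofPowerSeries_X, HahnSeries.ofPowerSeries_C, mul_add,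
    ← mul_assoc, HahnSeries.single_mul_single, HahnSeries.C_apply, HahnSeries.single_mul_single]
  simp [Pser, add_comm]

theorem sum_steps_succ (ℓ n : ℕ) :
    ∑ l ∈ steps (ℓ + 1) (n - (ℓ + 1 : ℕ)), weight l
      = ∑ p ∈ antidiagonal n, pw (p.1 - 1) * ∑ l ∈ steps ℓ (p.2 - ℓ), weight l := by
  simp_rw [mul_sum]
  rw [sum_sigma']
  symm
  refine sum_bij (fun x _ => ((x.1.1 : ℤ) - 1) :: x.2) ?_ ?_ ?_ ?_
  · rintro ⟨⟨a, b⟩, t⟩ hx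
    simp only [mem_sigma, HasAntidiagonal.mem_antidiagonal] at hx
    obtain ⟨rfl, ht⟩ := hx
    obtain ⟨hlen, hstep, hsum⟩ := mem_steps.1 ht
    refine mem_steps.2 ⟨by simp [hlen], ?_, ?_⟩
    · exact List.forall_mem_cons.2 ⟨by omega, hstep⟩
    · simp only [List.sum_cons, hsum]
      push_cast
      ring
  · rintro ⟨⟨a, b⟩, t⟩ hx ⟨⟨a', b'⟩, t'⟩ hx' h
    simp only [mem_sigma, HasAntidiagonal.mem_antidiagonal] at hx hx'
    simp only [List.cons.injEq, sub_left_inj, Nat.cast_inj] at h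
    obtain ⟨rfl, rfl⟩ := h
    obtain rfl : b = b' := by omega
    rfl
  · intro l hl
    obtain ⟨hlen, hstep, hsum⟩ := mem_steps.1 hl
    obtain ⟨x, t, rfl⟩ := List.exists_cons_of_length_eq_add_one hlen
    have ht := neg_length_le_sum (l := t) fun y hy => hstep y (List.mem_cons_of_mem x hy)
    have hx := hstep x List.mem_cons_self
    simp only [List.length_cons, add_left_inj, List.sum_cons] at hlen hsum
    refine ⟨⟨((x + 1).toNat, n - (x + 1).toNat), t⟩, ?_, ?_⟩
    · simp only [mem_sigma, HasAntidiagonal.mem_antidiagonal]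
      refine ⟨by omega, mem_steps.2 ⟨hlen, fun y hy => hstep y (List.mem_cons_of_mem x hy), ?_⟩⟩
      omega
    · simp only [List.cons.injEq, and_true]
      omega
  · rintro ⟨⟨a, b⟩, t⟩ _
    exact (weight_cons _ t).symm

theorem coeff_stepSeries_pow (ℓ n : ℕ) :
    PowerSeries.coeff n (stepSeries ^ ℓ) = ∑ l ∈ steps ℓ (n - ℓ), weight l := by
  induction ℓ generalizing n with
  | zero =>
    rw [pow_zero, PowerSeries.coeff_one, sum_steps_zero]
    simp
  | succ ℓ ih =>
    rw [pow_succ', PowerSeries.coeff_mul, sum_steps_succ]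
    simp_rw [ih, stepSeries, PowerSeries.coeff_mk]

theorem coeff_Pser_pow (ℓ : ℕ) (c : ℤ) : (Pser ^ ℓ).coeff c = ∑ l ∈ steps ℓ c, weight l := by
  rw [Pser_eq, mul_pow, HahnSeries.single_pow, one_pow, ← map_pow, HahnSeries.coeff_single_mul,
    one_mul, PowerSeries.coeff_coe]
  simp only [nsmul_eq_mul, mul_neg, mul_one, sub_neg_eq_add]
  split_ifs with h
  · rw [steps_eq_empty (by omega), sum_empty]
  · rw [coeff_stepSeries_pow]
    congr 2
    omega

end SkipFree

theorem cycle_lemma_general (k ℓ : ℕ) (hℓ : 1 ≤ ℓ) :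
    (∑ᶠ (π : Fin (ℓ + 1) → ℤ)
        (_ : IsDSF π ∧ π 0 = 0 ∧ π (Fin.last ℓ) = -(k : ℤ) ∧
          ∀ i : Fin ℓ, -(k : ℤ) < π i.castSucc),
        walkWeight π)
      = ((k : ℚ) / (ℓ : ℚ)) •
        (∑ᶠ (π : Fin (ℓ + 1) → ℤ)
          (_ : IsDSF π ∧ π 0 = 0 ∧ π (Fin.last ℓ) = -(k : ℤ)), walkWeight π) ∧
    PowerSeries.coeff ℓ (Uexc ^ k)
      = ((k : ℚ) / (ℓ : ℚ)) • (Pser ^ ℓ).coeff (-(k : ℤ)) := by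
  rw [SkipFree.finsum_walks_eq_sum_firstPassage, SkipFree.finsum_walks_eq_sum_steps,
    SkipFree.coeff_Uexc_pow, SkipFree.coeff_Pser_pow]
  exact ⟨SkipFree.sum_firstPassage_eq_smul hℓ k, SkipFree.sum_firstPassage_eq_smul hℓ k⟩

/-- Cycle lemma for downward skip-free walks: for `k, ℓ ≥ 1`, the weighted count of
`ℓ`-step downward skip-free walks from `0` to `-k` remaining strictly above `-k` before
the last step equals `(k/ℓ)` times the weighted count of all `ℓ`-step downward skip-free
walks from `0` to `-k`; in generating-function terms, `[s^ℓ] U(s)^k = (k/ℓ)·[u^{-k}] P(u)^ℓ`. -/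
theorem cycle_lemma (k ℓ : ℕ) (hk : 1 ≤ k) (hℓ : 1 ≤ ℓ) :
    (∑ᶠ (π : Fin (ℓ + 1) → ℤ)
        (_ : IsDSF π ∧ π 0 = 0 ∧ π (Fin.last ℓ) = -(k : ℤ) ∧
          ∀ i : Fin ℓ, -(k : ℤ) < π i.castSucc),
        walkWeight π)
      = ((k : ℚ) / (ℓ : ℚ)) •
        (∑ᶠ (π : Fin (ℓ + 1) → ℤ)
          (_ : IsDSF π ∧ π 0 = 0 ∧ π (Fin.last ℓ) = -(k : ℤ)), walkWeight π) ∧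
    PowerSeries.coeff ℓ (Uexc ^ k)
      = ((k : ℚ) / (ℓ : ℚ)) • (Pser ^ ℓ).coeff (-(k : ℤ)) :=
  cycle_lemma_general k ℓ hℓ

end
end

section
/- (Formal Wiener–Hopf factorization) In the ring ℚ[p_{−1},p₀,...]((u))[[s]] one has 1 − sP(u) = (1 − U(s)/u)·(1 − Σ_{h≥0} A_h^>(s) u^h), where U(s) is the excursion generating function and A_h^>(s) is the generating function of strict arches of tilt h (nonempty DSF walks from 0 to h staying at positions > h strictly in between). -/
noncomputable section

/-- The total weight of strict arches of tilt `h` with `ℓ` steps: nonempty downward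
skip-free walks from `0` to `h` staying at positions `> h` strictly in between. -/
def archCoeff (h : ℕ) (ℓ : ℕ) : Rp :=
  ∑ᶠ (π : Fin (ℓ + 1) → ℤ)
    (_ : 1 ≤ ℓ ∧ IsDSF π ∧ π 0 = 0 ∧ π (Fin.last ℓ) = (h : ℤ) ∧
      ∀ i : Fin ℓ, i.castSucc ≠ 0 → (h : ℤ) < π i.castSucc),
    walkWeight π

/-!
Comparing coefficients of `sⁿ uᵍ`, and regarding an excursion as a strict arch of tilt `-1`,
the factorization says: for `g ≥ -1` the weight of the `n`-step strict arches of tilt `g` is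
`p_g` if `n = 1`, and `∑_{k+m=n} U_k · A^>_{g+1,m}` if `n ≥ 2`. The latter is the first-passage
decomposition. Being skip-free, an arch of tilt `g` with at least two steps is at `g + 1` one step
before its end, so it can be cut at its first visit to `g + 1` after time `0`. The piece before
the cut is a strict arch of tilt `g + 1`, and the piece after it is an excursion shifted up by
`g + 1`. The cut is unique because no arch has a proper prefix that is an arch of the same tilt.
-/

open Finset

/-- A walk is encoded by its list of increments; its position after `k` steps is
`(l.take k).sum`. -/
structure IsStrictArch (h : ℤ) (l : List ℤ) : Prop where
  ne_nil : l ≠ []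
  neg_one_le : ∀ x ∈ l, -1 ≤ x
  sum_eq : l.sum = h
  lt_sum_take : ∀ k, 0 < k → k < l.length → h < (l.take k).sum

namespace IsStrictArch

variable {h : ℤ} {l : List ℤ}

theorem le_sum_take (hl : IsStrictArch h l) {k : ℕ} (hk : 0 < k) : h ≤ (l.take k).sum := by
  rcases lt_or_ge k l.length with hkl | hkl
  · exact (hl.lt_sum_take k hk hkl).le
  · rw [List.take_of_length_le hkl, hl.sum_eq]

theorem le_of_mem (hl : IsStrictArch h l) {x : ℤ} (hx : x ∈ l) : x ≤ h + l.length := by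
  classical
  have hsum := List.sum_erase hx
  have hlen := List.length_erase_of_mem hx
  have hrest := List.card_nsmul_le_sum (l.erase x) (-1) fun y hy =>
    hl.neg_one_le y (List.mem_of_mem_erase hy)
  rw [hl.sum_eq] at hsum
  simp only [smul_neg, nsmul_eq_mul, mul_one, hlen] at hrest
  omega

theorem eq_nil_of_append {c : List ℤ} (hl : IsStrictArch h l) (hlc : IsStrictArch h (l ++ c)) :
    c = [] := by
  by_contra hc
  have hlt : l.length < (l ++ c).length := by
    simpa using List.length_pos_iff.mpr hc
  have := hlc.lt_sum_take l.length (List.length_pos_iff.mpr hl.ne_nil) hlt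
  rw [List.take_left' rfl, hl.sum_eq] at this
  exact this.false

theorem append_inj {l' e e' : List ℤ} (hl : IsStrictArch h l) (hl' : IsStrictArch h l')
    (he : l ++ e = l' ++ e') : l = l' ∧ e = e' := by
  rcases List.append_eq_append_iff.mp he with ⟨c, rfl, rfl⟩ | ⟨c, rfl, rfl⟩
  · obtain rfl := hl.eq_nil_of_append hl'
    simp
  · obtain rfl := hl'.eq_nil_of_append hl
    simp

theorem append {e : List ℤ} (hl : IsStrictArch (h + 1) l) (he : IsStrictArch (-1) e) :
    IsStrictArch h (l ++ e) := by
  refine ⟨by simp [hl.ne_nil], ?_, ?_, fun k hk hkl => ?_⟩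
  · simpa [or_imp, forall_and] using ⟨hl.neg_one_le, he.neg_one_le⟩
  · rw [List.sum_append, hl.sum_eq, he.sum_eq]
    ring
  · have hpre := hl.le_sum_take hk
    have hsuf : 0 ≤ (e.take (k - l.length)).sum := by
      rcases Nat.eq_zero_or_pos (k - l.length) with h0 | hpos
      · simp [h0]
      · have := he.lt_sum_take _ hpos (by simp at hkl; omega)
        omega
    rw [List.take_append, List.sum_append]
    omega

theorem sum_take_length_sub_one (hl : IsStrictArch h l) (hlen : 2 ≤ l.length) :
    (l.take (l.length - 1)).sum = h + 1 := by
  have hlast : -1 ≤ (l.drop (l.length - 1)).sum := by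
    have := List.card_nsmul_le_sum (l.drop (l.length - 1)) (-1) fun x hx =>
      hl.neg_one_le x (List.mem_of_mem_drop hx)
    simpa [show l.length - (l.length - 1) = 1 by omega] using this
  have hsplit := List.sum_take_add_sum_drop l (l.length - 1)
  have hbefore := hl.lt_sum_take (l.length - 1) (by omega) (by omega)
  rw [hl.sum_eq] at hsplit
  omega

/-- The cut is made at the first visit to `h + 1` after time `0`. -/
theorem exists_append (hl : IsStrictArch h l) (hlen : 2 ≤ l.length) :
    ∃ a e, IsStrictArch (h + 1) a ∧ IsStrictArch (-1) e ∧ a ++ e = l := by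
  classical
  have hex : ∃ k, 0 < k ∧ (l.take k).sum = h + 1 :=
    ⟨l.length - 1, by omega, hl.sum_take_length_sub_one hlen⟩
  obtain ⟨hk0, hkh⟩ := Nat.find_spec hex
  set k := Nat.find hex
  have hkl : k < l.length :=
    (Nat.find_min' hex ⟨by omega, hl.sum_take_length_sub_one hlen⟩).trans_lt (by omega)
  refine ⟨l.take k, l.drop k, ⟨?_, ?_, hkh, fun j hj hjk => ?_⟩, ⟨?_, ?_, ?_, fun j hj hjk => ?_⟩,
    List.take_append_drop k l⟩
  · simpa using ⟨hk0.ne', hl.ne_nil⟩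
  · exact fun x hx => hl.neg_one_le x (List.mem_of_mem_take hx)
  · rw [List.length_take] at hjk
    rw [List.take_take, min_eq_left (by omega)]
    have hne : (l.take j).sum ≠ h + 1 := fun heq => Nat.find_min hex (by omega) ⟨hj, heq⟩
    have := hl.lt_sum_take j hj (by omega)
    omega
  · simpa using hkl
  · exact fun x hx => hl.neg_one_le x (List.mem_of_mem_drop hx)
  · have := List.sum_take_add_sum_drop l k
    rw [hkh, hl.sum_eq] at this
    omega
  · rw [List.length_drop] at hjk
    have := hl.lt_sum_take (k + j) (by omega) (by omega)
    rw [List.take_add, List.sum_append, hkh] at this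
    omega

end IsStrictArch

theorem finite_setOf_isStrictArch (h : ℤ) (n : ℕ) :
    {l | IsStrictArch h l ∧ l.length = n}.Finite := by
  refine ((List.finite_length_eq (Set.Icc (-1) (h + n)) n).image (List.map Subtype.val)).subset ?_
  rintro l ⟨hl, hlen⟩
  lift l to List (Set.Icc (-1) (h + n)) using
    fun x hx => ⟨hl.neg_one_le x hx, hlen ▸ hl.le_of_mem hx⟩
  exact ⟨l, by simpa using hlen, rfl⟩

def strictArches (h : ℤ) (n : ℕ) : Finset (List ℤ) :=
  (finite_setOf_isStrictArch h n).toFinset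

@[simp]
theorem mem_strictArches {h : ℤ} {n : ℕ} {l : List ℤ} :
    l ∈ strictArches h n ↔ IsStrictArch h l ∧ l.length = n :=
  Set.Finite.mem_toFinset _

theorem strictArches_zero (h : ℤ) : strictArches h 0 = ∅ :=
  Finset.eq_empty_of_forall_notMem fun _ hl =>
    (mem_strictArches.mp hl).1.ne_nil (List.eq_nil_of_length_eq_zero (mem_strictArches.mp hl).2)

theorem strictArches_one {h : ℤ} (hh : -1 ≤ h) : strictArches h 1 = {[h]} := by
  ext l
  rw [mem_strictArches, Finset.mem_singleton]
  constructor
  · rintro ⟨hl, hlen⟩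
    obtain ⟨x, rfl⟩ := List.length_eq_one_iff.mp hlen
    simpa using hl.sum_eq
  · rintro rfl
    exact ⟨⟨by simp, by simpa using hh, by simp, fun k hk hk1 => by simp at hk1; omega⟩, rfl⟩

section archSum

variable {R : Type*} [CommSemiring R] (w : ℤ → R)

def archSum (h : ℤ) (n : ℕ) : R :=
  ∑ l ∈ strictArches h n, (l.map w).prod

@[simp]
theorem archSum_zero (h : ℤ) : archSum w h 0 = 0 := by
  simp [archSum, strictArches_zero]

theorem archSum_one {h : ℤ} (hh : -1 ≤ h) : archSum w h 1 = w h := by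
  simp [archSum, strictArches_one hh]

theorem archSum_eq_sum_antidiagonal (h : ℤ) {n : ℕ} (hn : 2 ≤ n) :
    archSum w h n = ∑ p ∈ antidiagonal n, archSum w (-1) p.1 * archSum w (h + 1) p.2 := by
  simp only [archSum, Finset.sum_mul_sum, ← Finset.sum_product', Finset.sum_sigma']
  symm
  refine Finset.sum_bij (fun x _ => x.2.2 ++ x.2.1) ?_ ?_ ?_ ?_
  · rintro ⟨⟨k, m⟩, e, a⟩ hx
    simp only [Finset.mem_sigma, HasAntidiagonal.mem_antidiagonal, Finset.mem_product,
      mem_strictArches] at hx ⊢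
    obtain ⟨hkm, ⟨he, rfl⟩, ⟨ha, rfl⟩⟩ := hx
    exact ⟨ha.append he, by simp [← hkm, add_comm]⟩
  · rintro ⟨⟨k, m⟩, e, a⟩ hx ⟨⟨k', m'⟩, e', a'⟩ hx' hxx'
    simp only [Finset.mem_sigma, HasAntidiagonal.mem_antidiagonal, Finset.mem_product,
      mem_strictArches] at hx hx'
    obtain ⟨-, ⟨-, rfl⟩, ⟨ha, rfl⟩⟩ := hx
    obtain ⟨-, ⟨-, rfl⟩, ⟨ha', rfl⟩⟩ := hx'
    obtain ⟨rfl, rfl⟩ := ha.append_inj ha' hxx'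
    rfl
  · intro l hl
    rw [mem_strictArches] at hl
    obtain ⟨a, e, ha, he, rfl⟩ := hl.1.exists_append (hl.2 ▸ hn)
    refine ⟨⟨(e.length, a.length), e, a⟩, ?_, rfl⟩
    simp only [Finset.mem_sigma, HasAntidiagonal.mem_antidiagonal, Finset.mem_product,
      mem_strictArches, and_true]
    exact ⟨by simpa [add_comm] using hl.2, he, ha⟩
  · intro x _
    simp [List.prod_append, mul_comm]

end archSum

theorem archSum_sub_sum_antidiagonal {R : Type*} [CommRing R] (w : ℤ → R) {h : ℤ} (hh : -1 ≤ h)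
    (n : ℕ) :
    archSum w h n - ∑ p ∈ antidiagonal n, archSum w (-1) p.1 * archSum w (h + 1) p.2 =
      if n = 1 then w h else 0 := by
  match n with
  | 0 => simp
  | 1 => simp [archSum_one w hh, Finset.Nat.antidiagonal_succ]
  | n + 2 => rw [← archSum_eq_sum_antidiagonal w h (by omega), sub_self, if_neg (by omega)]

theorem coeff_ofPowerSeries_mk {R : Type*} [Semiring R] (f : ℕ → R) (g : ℤ) :
    (HahnSeries.ofPowerSeries ℤ R (PowerSeries.mk f)).coeff g = if 0 ≤ g then f g.toNat else 0 := by
  rw [PowerSeries.coeff_coe, PowerSeries.coeff_mk]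
  split_ifs <;> first | omega | rfl | (congr 1; omega)

section Series

variable {R : Type*} [CommRing R] (w : ℤ → R)

def stepSeries : LaurentSeries R :=
  HahnSeries.single (-1 : ℤ) (w (-1)) + HahnSeries.ofPowerSeries ℤ R (PowerSeries.mk fun n => w n)

def excSeries : PowerSeries (LaurentSeries R) :=
  PowerSeries.mk fun n => HahnSeries.single (-1 : ℤ) (archSum w (-1) n)

def archSeries : PowerSeries (LaurentSeries R) :=
  PowerSeries.mk fun n => HahnSeries.ofPowerSeries ℤ R (PowerSeries.mk fun h : ℕ => archSum w h n)

theorem coeff_stepSeries (g : ℤ) : (stepSeries w).coeff g = if -1 ≤ g then w g else 0 := by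
  rw [stepSeries, HahnSeries.coeff_add, HahnSeries.coeff_single, coeff_ofPowerSeries_mk]
  split_ifs <;> first | omega | simp_all

theorem coeff_excSeries_add_archSeries (n : ℕ) (g : ℤ) :
    (PowerSeries.coeff n (excSeries w + archSeries w)).coeff g =
      if -1 ≤ g then archSum w g n else 0 := by
  rw [map_add, HahnSeries.coeff_add, excSeries, archSeries, PowerSeries.coeff_mk,
    PowerSeries.coeff_mk, HahnSeries.coeff_single, coeff_ofPowerSeries_mk]
  split_ifs <;> first | omega | simp_all

theorem coeff_excSeries_mul_archSeries (n : ℕ) (g : ℤ) :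
    (PowerSeries.coeff n (excSeries w * archSeries w)).coeff g =
      ∑ p ∈ antidiagonal n, archSum w (-1) p.1 * if -1 ≤ g then archSum w (g + 1) p.2 else 0 := by
  rw [PowerSeries.coeff_mul, HahnSeries.coeff_sum]
  refine Finset.sum_congr rfl fun p _ => ?_
  rw [excSeries, archSeries, PowerSeries.coeff_mk, PowerSeries.coeff_mk,
    show g = (g + 1) + -1 by ring, HahnSeries.coeff_single_mul_add, coeff_ofPowerSeries_mk]
  split_ifs <;> first | omega | simp_all

theorem excSeries_add_archSeries_sub_mul :
    excSeries w + archSeries w - excSeries w * archSeries w =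
      PowerSeries.X * PowerSeries.C (stepSeries w) := by
  ext n g
  rw [map_sub, HahnSeries.coeff_sub, coeff_excSeries_add_archSeries,
    coeff_excSeries_mul_archSeries, mul_comm, ← pow_one PowerSeries.X,
    PowerSeries.coeff_C_mul_X_pow, apply_ite (HahnSeries.coeff · g), coeff_stepSeries,
    HahnSeries.coeff_zero]
  by_cases hg : -1 ≤ g
  · simp only [if_pos hg]
    exact archSum_sub_sum_antidiagonal w hg n
  · simp [hg]

end Series

def increments {ℓ : ℕ} (π : Fin (ℓ + 1) → ℤ) : List ℤ :=
  List.ofFn fun i : Fin ℓ => π i.succ - π i.castSucc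

@[simp]
theorem length_increments {ℓ : ℕ} (π : Fin (ℓ + 1) → ℤ) : (increments π).length = ℓ :=
  List.length_ofFn

theorem sum_take_increments {ℓ : ℕ} (π : Fin (ℓ + 1) → ℤ) (k : Fin (ℓ + 1)) :
    ((increments π).take k).sum = π k - π 0 := by
  induction k using Fin.induction with
  | zero => simp
  | succ i ih =>
    rw [Fin.val_castSucc] at ih
    rw [Fin.val_succ, List.sum_take_succ _ _ (by simp), ih]
    simp [increments]

theorem walkWeight_eq_prod_increments {ℓ : ℕ} (π : Fin (ℓ + 1) → ℤ) :
    walkWeight π = ((increments π).map pw).prod := by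
  simp [walkWeight, increments, List.map_ofFn, List.prod_ofFn]

theorem increments_injOn (ℓ : ℕ) : Set.InjOn increments {π : Fin (ℓ + 1) → ℤ | π 0 = 0} := by
  intro π hπ π' hπ' heq
  funext k
  have := sum_take_increments π k
  rw [heq, sum_take_increments, hπ, hπ'] at this
  omega

theorem exists_increments_eq (l : List ℤ) :
    ∃ π : Fin (l.length + 1) → ℤ, π 0 = 0 ∧ increments π = l := by
  refine ⟨fun k => (l.take k).sum, by simp, ?_⟩
  conv_rhs => rw [← List.ofFn_getElem (xs := l)]
  unfold increments
  congr 1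
  funext i
  simp [List.sum_take_succ _ _ i.isLt]

theorem isStrictArch_increments_iff {ℓ : ℕ} {π : Fin (ℓ + 1) → ℤ} (hπ : π 0 = 0) (hℓ : ℓ ≠ 0)
    (h : ℤ) :
    IsStrictArch h (increments π) ↔
      IsDSF π ∧ π (Fin.last ℓ) = h ∧ ∀ i : Fin ℓ, i.castSucc ≠ 0 → h < π i.castSucc := by
  have hne : increments π ≠ [] := List.length_pos_iff.mp (by simp; omega)
  have hdsf : (∀ x ∈ increments π, -1 ≤ x) ↔ IsDSF π := List.forall_mem_ofFn_iff
  have hsum : (increments π).sum = π (Fin.last ℓ) := by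
    simpa [hπ, List.take_of_length_le] using sum_take_increments π (Fin.last ℓ)
  have htake (i : Fin ℓ) : ((increments π).take i).sum = π i.castSucc := by
    simpa [hπ] using sum_take_increments π i.castSucc
  have hpre : (∀ k, 0 < k → k < (increments π).length → h < ((increments π).take k).sum) ↔
      ∀ i : Fin ℓ, i.castSucc ≠ 0 → h < π i.castSucc := by
    simp only [length_increments, ← htake, ne_eq, Fin.ext_iff, Fin.val_castSucc, Fin.val_zero]
    exact ⟨fun H i hi => H i (by omega) i.isLt, fun H k hk hkℓ => H ⟨k, hkℓ⟩ (by simp; omega)⟩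
  constructor
  · rintro ⟨-, hsteps, hend, hpos⟩
    exact ⟨hdsf.mp hsteps, hsum.symm.trans hend, hpre.mp hpos⟩
  · rintro ⟨hsteps, hend, hpos⟩
    exact ⟨hne, hdsf.mpr hsteps, hsum.trans hend, hpre.mpr hpos⟩

theorem finsum_walkWeight_eq_archSum (h : ℤ) {ℓ : ℕ} (hℓ : ℓ ≠ 0) :
    ∑ᶠ (π : Fin (ℓ + 1) → ℤ) (_ : IsDSF π ∧ π 0 = 0 ∧ π (Fin.last ℓ) = h ∧
      ∀ i : Fin ℓ, i.castSucc ≠ 0 → h < π i.castSucc), walkWeight π = archSum pw h ℓ := by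
  rw [archSum, strictArches, ← finsum_mem_eq_finite_toFinset_sum]
  refine finsum_mem_eq_of_bijOn increments ⟨?_, ?_, ?_⟩ fun π _ => walkWeight_eq_prod_increments π
  · rintro π ⟨hdsf, hπ, hlast, hpos⟩
    exact ⟨(isStrictArch_increments_iff hπ hℓ h).mpr ⟨hdsf, hlast, hpos⟩, length_increments π⟩
  · exact (increments_injOn ℓ).mono fun π hπ => hπ.2.1
  · rintro l ⟨hl, rfl⟩
    obtain ⟨π, hπ, hπl⟩ := exists_increments_eq l
    obtain ⟨hdsf, hlast, hpos⟩ := (isStrictArch_increments_iff hπ hℓ h).mp (hπl.symm ▸ hl)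
    exact ⟨π, ⟨hdsf, hπ, hlast, hpos⟩, hπl⟩

theorem excCoeff_eq_archSum (ℓ : ℕ) : excCoeff ℓ = archSum pw (-1) ℓ := by
  rcases eq_or_ne ℓ 0 with rfl | hℓ
  · simp only [excCoeff, archSum_zero]
    refine finsum_eq_zero_of_forall_eq_zero fun π => ?_
    classical
    rw [finsum_eq_if, if_neg]
    rintro ⟨-, h0, hlast, -⟩
    exact absurd (h0.symm.trans hlast) (by decide)
  · rw [← finsum_walkWeight_eq_archSum (-1) hℓ, excCoeff]
    refine finsum_congr fun π => finsum_congr_Prop (propext ?_) fun _ => rfl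
    refine and_congr_right fun _ => and_congr_right fun h0 => and_congr_right fun _ => ?_
    refine forall_congr' fun i => ⟨fun hi _ => by omega, fun hi => ?_⟩
    rcases eq_or_ne i.castSucc 0 with hi0 | hi0
    · rw [hi0, h0]
    · have := hi hi0
      omega

theorem archCoeff_eq_archSum (h ℓ : ℕ) : archCoeff h ℓ = archSum pw h ℓ := by
  rcases eq_or_ne ℓ 0 with rfl | hℓ
  · simp [archCoeff]
  · simp only [archCoeff, ← finsum_walkWeight_eq_archSum h hℓ, Nat.one_le_iff_ne_zero.mpr hℓ,
      true_and]

/-- Formal Wiener–Hopf factorization, in the ring `ℚ[p_{-1},p₀,...]((u))[[s]]`: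
`1 − sP(u) = (1 − U(s)/u)·(1 − Σ_{h≥0} A_h^>(s) u^h)`, where `U(s)` is the excursion
generating function and `A_h^>(s)` the generating function of strict arches of tilt `h`. -/
theorem wiener_hopf_factorization :
    (1 : PowerSeries (LaurentSeries Rp))
        - PowerSeries.X * PowerSeries.C (R := LaurentSeries Rp) Pser
      = (1 - PowerSeries.mk fun ℓ => HahnSeries.single (-1 : ℤ) (excCoeff ℓ))
        * (1 - PowerSeries.mk fun ℓ =>
            HahnSeries.ofPowerSeries ℤ Rp (PowerSeries.mk fun h => archCoeff h ℓ)) := by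
  simp only [excCoeff_eq_archSum, archCoeff_eq_archSum]
  have key := excSeries_add_archSeries_sub_mul pw
  rw [excSeries, archSeries, stepSeries] at key
  rw [Pser]
  linear_combination key

end
end

section
/- Let x(z) = Σ_{k≥−1} a_k z^{−k} and y(z) = z^{−1} + Σ_{k≥0} b_k z^k be formal Laurent series with coefficients in R = ℚ[[t, t₁°, t₂°, ..., t₁•, t₂•, ...]]. Then the system of equations [z^{−k}](x(z) − tz − Σ_{d≥1} t_d• y(z)^{d−1}) = 0 for all k ≥ −1, together with [z^k](y(z) − Σ_{d≥1} t_d° x(z)^{d−1}) = 0 for all k ≥ 0, determines the coefficients a_k (k ≥ −1) and b_k (k ≥ 0) uniquely as elements of R. -/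
noncomputable section

/-- Variable names: `Sum.inl ()` is the vertex weight `t`; `Sum.inr (Sum.inl d)` is the
white face weight `t_d°`; `Sum.inr (Sum.inr d)` is the black face weight `t_d•`. -/
abbrev SVar : Type := Unit ⊕ ℕ ⊕ ℕ

/-- The base ring `R = ℚ[[t, t₁°, t₂°, ..., t₁•, t₂•, ...]]`. -/
abbrev R13 : Type := MvPowerSeries SVar ℚ

def tvar : R13 := MvPowerSeries.X (Sum.inl ())
def toW (d : ℕ) : SVar := Sum.inr (Sum.inl d)   -- index of t_d°
def tbW (d : ℕ) : SVar := Sum.inr (Sum.inr d)   -- index of t_d•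

/-- `[z^k] x(z)^m` where `x(z) = Σ_{j≥−1} a_j z^{−j}`: the sum over all ways to choose
exponents `e i ≤ 1` of `z` in each factor with total `k`, of the product of the
corresponding coefficients `a_{−e i}`. -/
def xcoef (a : ℤ → R13) (m : ℕ) (k : ℤ) : R13 :=
  ∑ᶠ (e : Fin m → ℤ) (_ : (∀ i, e i ≤ 1) ∧ ∑ i, e i = k), ∏ i, a (-(e i))

/-- `[z^k] y(z)^m` where `y(z) = Σ_{j≥−1} b_j z^{j}` (with `b_{−1} = 1`). -/
def ycoef (b : ℤ → R13) (m : ℕ) (k : ℤ) : R13 :=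
  ∑ᶠ (e : Fin m → ℤ) (_ : (∀ i, -1 ≤ e i) ∧ ∑ i, e i = k), ∏ i, b (e i)

/-- The infinite sum `Σ_{d∈ℕ} X_{v d} · (c d)`, defined coefficientwise: the coefficient
of a monomial `μ` receives a contribution from the term of index `d` exactly when `μ`
contains the variable `X_{v d}`. This makes sense of `Σ_{d≥1} t_d° (⋯)` and
`Σ_{d≥1} t_d• (⋯)` in `R`. -/
def varSum (v : ℕ → SVar) (c : ℕ → R13) : R13 :=
  fun μ => ∑ᶠ (d : ℕ) (_ : 1 ≤ μ (v d)),
    MvPowerSeries.coeff (μ - Finsupp.single (v d) 1) (c d)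

/-- The system of equations `[z^{−k}](x(z) − tz − Σ_{d≥1} t_d• y(z)^{d−1}) = 0` for
`k ≥ −1`, and `[z^k](y(z) − Σ_{d≥1} t_d° x(z)^{d−1}) = 0` for `k ≥ 0`, for
`x(z) = Σ_{k≥−1} a_k z^{−k}` and `y(z) = z^{−1} + Σ_{k≥0} b_k z^k`. -/
def SatisfiesSystem (a b : ℤ → R13) : Prop :=
  (∀ k : ℤ, k < -1 → a k = 0) ∧
  (b (-1) = 1) ∧ (∀ k : ℤ, k < -1 → b k = 0) ∧
  (∀ k : ℤ, -1 ≤ k →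
    a k = (if k = -1 then tvar else 0)
      + varSum tbW (fun d => if 1 ≤ d then ycoef b (d - 1) (-k) else 0)) ∧
  (∀ k : ℤ, 0 ≤ k →
    b k = varSum toW (fun d => if 1 ≤ d then xcoef a (d - 1) k else 0))

/-! Every term of the right-hand sides that involves the unknowns carries a factor `t_d°` or
`t_d•`, so the coefficient of a right-hand side at a monomial `μ` depends only on the
coefficients of the unknowns at monomials of smaller total degree. The system is thus a
fixed-point equation for a map that is contracting for the total-degree filtration of `R`, and
such a map has exactly one fixed point: its coefficient at `μ` is that of `G^[n] 0` for any
`n > degree μ`. -/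

namespace MvPowerSeries

variable {σ R : Type*} [CommRing R]

def orderGeIdeal (n : ℕ) : Ideal (MvPowerSeries σ R) where
  carrier := {f | n ≤ f.order}
  add_mem' hf hg := (le_min hf hg).trans min_order_le_add
  zero_mem' := by simp
  smul_mem' c _ hf := hf.trans (le_add_self.trans le_order_mul)

theorem smodEq_orderGeIdeal_iff {n : ℕ} {f g : MvPowerSeries σ R} :
    f ≡ g [SMOD orderGeIdeal n] ↔ ∀ d : σ →₀ ℕ, d.degree < n → coeff d f = coeff d g := by
  rw [SModEq.sub_mem]
  change (n : ℕ∞) ≤ (f - g).order ↔ _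
  constructor
  · intro h d hd
    rw [← sub_eq_zero, ← map_sub]
    exact coeff_of_lt_order (lt_of_lt_of_le (by exact_mod_cast hd) h)
  · intro h
    exact nat_le_order fun d hd => by rw [map_sub, h d hd, sub_self]

variable {ι : Type*}

def DegreeContracting (G : (ι → MvPowerSeries σ R) → ι → MvPowerSeries σ R) : Prop :=
  ∀ n p q, (∀ i, p i ≡ q i [SMOD orderGeIdeal n]) → ∀ i, G p i ≡ G q i [SMOD orderGeIdeal (n + 1)]

def degreeLimit (G : (ι → MvPowerSeries σ R) → ι → MvPowerSeries σ R) :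
    ι → MvPowerSeries σ R :=
  fun i d => coeff d (G^[d.degree + 1] 0 i)

namespace DegreeContracting

variable {G : (ι → MvPowerSeries σ R) → ι → MvPowerSeries σ R}

theorem iterate_smodEq (hG : DegreeContracting G) (n : ℕ) (p q : ι → MvPowerSeries σ R)
    (i : ι) :
    G^[n] p i ≡ G^[n] q i [SMOD orderGeIdeal n] := by
  induction n generalizing i with
  | zero => exact smodEq_orderGeIdeal_iff.mpr fun d hd => absurd hd (Nat.not_lt_zero _)
  | succ n ih =>
    rw [Function.iterate_succ_apply', Function.iterate_succ_apply']
    exact hG n _ _ ih i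

theorem eq_of_fixed (hG : DegreeContracting G) {p q : ι → MvPowerSeries σ R} (hp : G p = p)
    (hq : G q = q) : p = q := by
  funext i
  ext d
  have h := hG.iterate_smodEq (d.degree + 1) p q i
  rw [Function.iterate_fixed hp, Function.iterate_fixed hq] at h
  exact smodEq_orderGeIdeal_iff.mp h d d.degree.lt_succ_self

theorem degreeLimit_smodEq_iterate (hG : DegreeContracting G) (n : ℕ) (i : ι) :
    degreeLimit G i ≡ G^[n] 0 i [SMOD orderGeIdeal n] := by
  refine smodEq_orderGeIdeal_iff.mpr fun d hd => ?_
  obtain ⟨k, rfl⟩ : ∃ k, n = d.degree + 1 + k := ⟨n - (d.degree + 1), by omega⟩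
  rw [Function.iterate_add_apply]
  exact smodEq_orderGeIdeal_iff.mp (hG.iterate_smodEq _ 0 _ i) d d.degree.lt_succ_self

theorem degreeLimit_fixed (hG : DegreeContracting G) : G (degreeLimit G) = degreeLimit G := by
  funext i
  ext d
  have h := hG d.degree _ _ (hG.degreeLimit_smodEq_iterate d.degree) i
  rw [← Function.iterate_succ_apply' G] at h
  exact smodEq_orderGeIdeal_iff.mp h d d.degree.lt_succ_self

theorem existsUnique_fixed (hG : DegreeContracting G) : ∃! p, G p = p :=
  ⟨degreeLimit G, hG.degreeLimit_fixed, fun _ hp => hG.eq_of_fixed hp hG.degreeLimit_fixed⟩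

end DegreeContracting

end MvPowerSeries

open MvPowerSeries

theorem setOf_forall_le_sum_eq_finite {ι : Type*} [Fintype ι] (c k : ℤ) :
    {e : ι → ℤ | (∀ i, e i ≤ c) ∧ ∑ i, e i = k}.Finite := by
  refine (Set.Finite.pi' fun _ => Set.finite_Icc (k + c - Fintype.card ι * c) c).subset ?_
  rintro e ⟨hc, hk⟩ i
  have : c - e i ≤ ∑ j, (c - e j) :=
    Finset.single_le_sum (fun j _ => sub_nonneg.mpr (hc j)) (Finset.mem_univ i)
  simp only [Finset.sum_sub_distrib, hk, Finset.sum_const, Finset.card_univ, nsmul_eq_mul] at this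
  exact ⟨by linarith, hc i⟩

theorem setOf_forall_ge_sum_eq_finite {ι : Type*} [Fintype ι] (c k : ℤ) :
    {e : ι → ℤ | (∀ i, c ≤ e i) ∧ ∑ i, e i = k}.Finite := by
  convert (setOf_forall_le_sum_eq_finite (ι := ι) (-c) (-k)).preimage neg_injective.injOn using 1
  ext e
  simp [neg_le_neg_iff, Finset.sum_neg_distrib, neg_inj]

theorem finsum_mem_smodEq {α S M : Type*} [Ring S] [AddCommGroup M] [Module S M]
    {U : Submodule S M} {s : Set α} (hs : s.Finite) {f g : α → M} (h : ∀ x ∈ s, f x ≡ g x [SMOD U]) :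
    ∑ᶠ x ∈ s, f x ≡ ∑ᶠ x ∈ s, g x [SMOD U] := by
  rw [finsum_mem_eq_finite_toFinset_sum _ hs, finsum_mem_eq_finite_toFinset_sum _ hs]
  exact SModEq.sum fun x hx => h x (hs.mem_toFinset.mp hx)

theorem xcoef_smodEq {I : Ideal R13} {a a' : ℤ → R13} (h : ∀ j, a j ≡ a' j [SMOD I])
    (m : ℕ) (k : ℤ) : xcoef a m k ≡ xcoef a' m k [SMOD I] :=
  finsum_mem_smodEq (setOf_forall_le_sum_eq_finite 1 k) fun _ _ =>
    SModEq.prod fun _ _ => h _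

theorem ycoef_smodEq {I : Ideal R13} {b b' : ℤ → R13} (h : ∀ j, b j ≡ b' j [SMOD I])
    (m : ℕ) (k : ℤ) : ycoef b m k ≡ ycoef b' m k [SMOD I] :=
  finsum_mem_smodEq (setOf_forall_ge_sum_eq_finite (-1) k) fun _ _ =>
    SModEq.prod fun _ _ => h _

theorem varSum_smodEq {v : ℕ → SVar} {c c' : ℕ → R13} {n : ℕ}
    (h : ∀ d, c d ≡ c' d [SMOD orderGeIdeal n]) :
    varSum v c ≡ varSum v c' [SMOD orderGeIdeal (n + 1)] := by
  refine smodEq_orderGeIdeal_iff.mpr fun μ hμ =>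
    finsum_congr fun d => finsum_congr fun hd => smodEq_orderGeIdeal_iff.mp (h d) _ ?_
  have h_deg := congrArg Finsupp.degree (tsub_add_cancel_of_le (Finsupp.single_le_iff.mpr hd))
  rw [map_add, Finsupp.degree_single] at h_deg
  omega

/-- The right-hand sides of the system, acting on `f` with `a = f ∘ Sum.inl`, `b = f ∘ Sum.inr`;
the normalisations `a_k = 0`, `b_k = 0` for `k < -1` and `b_{-1} = 1` are built in. -/
def systemMap (f : ℤ ⊕ ℤ → R13) : ℤ ⊕ ℤ → R13
  | .inl k => if -1 ≤ k then (if k = -1 then tvar else 0)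
      + varSum tbW (fun d => if 1 ≤ d then ycoef (f ∘ .inr) (d - 1) (-k) else 0) else 0
  | .inr k => if 0 ≤ k then varSum toW (fun d => if 1 ≤ d then xcoef (f ∘ .inl) (d - 1) k else 0)
      else if k = -1 then 1 else 0

theorem satisfiesSystem_iff_systemMap_eq (f : ℤ ⊕ ℤ → R13) :
    SatisfiesSystem (f ∘ .inl) (f ∘ .inr) ↔ systemMap f = f := by
  simp only [SatisfiesSystem, funext_iff, Sum.forall, systemMap, Function.comp_apply]
  grind

theorem systemMap_degreeContracting : DegreeContracting systemMap := by
  intro n f g h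
  have ite_smodEq {p : Prop} [Decidable p] {x y z : R13} {m : ℕ}
      (hxy : x ≡ y [SMOD orderGeIdeal m]) :
      (if p then x else z) ≡ (if p then y else z) [SMOD orderGeIdeal m] := by
    split_ifs
    exacts [hxy, SModEq.rfl]
  rintro (k | k)
  · exact ite_smodEq <| SModEq.rfl.add <|
      varSum_smodEq fun _ => ite_smodEq <| ycoef_smodEq (fun j => h (.inr j)) _ _
  · exact ite_smodEq <| varSum_smodEq fun _ => ite_smodEq <| xcoef_smodEq (fun j => h (.inl j)) _ _

/-- The system of equations determines the coefficients `a_k` (`k ≥ −1`) and `b_k`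
(`k ≥ 0`) uniquely as elements of `R = ℚ[[t, t₁°, t₂°, ..., t₁•, t₂•, ...]]`. -/
theorem system_has_unique_solution :
    ∃! ab : (ℤ → R13) × (ℤ → R13), SatisfiesSystem ab.1 ab.2 := by
  refine ((Equiv.sumArrowEquivProdArrow ℤ ℤ R13).existsUnique_congr fun f => ?_).mp
    systemMap_degreeContracting.existsUnique_fixed
  exact (satisfiesSystem_iff_systemMap_eq f).symm

end
end
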